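/- Let n ∈ ℕ, n ≥ 2, and let A be the weighted Neumann graph Laplacian on {0,…,n−1}³ defined in the context. Then for every f : {0,…,n−1}³ → ℝ with Σ_{k} f(k) = 0, one has Σ_{k} f(k) (A f)(k) ≥ ((1 − cos(π/n))/2) Σ_{k} f(k)². (Spectral gap of A above the constant functions.) -/

import Mathlib

/-!
The Laplacian is `A = I - P ⊗ P ⊗ P`, where `P` is the lazy walk on `{0,…,n-1}` with weights
`1/4, 1/2, 1/4` and reflecting ends. The DCT-II modes `c_m(j) = cos (π m (2j+1) / (2n))`, `m < n`,
are even about `-1/2` and `n - 1/2`, so the reflection does not see them, and they are therefore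
eigenvectors of `P` with eigenvalues `λ_m = (1 + cos (π m / n)) / 2 ∈ [0, 1]`. They are also
orthogonal and complete, so expanding `f` in the products `c_{μ₀} ⊗ c_{μ₁} ⊗ c_{μ₂}` gives
`⟨f, A f⟩ = Σ_μ w_μ (1 - λ_{μ₀} λ_{μ₁} λ_{μ₂}) f̂(μ)²` and `‖f‖² = Σ_μ w_μ f̂(μ)²`.
The mean-zero condition is `f̂(0) = 0`, and every other mode has a factor `λ_m` with `m ≥ 1`,
so its product of eigenvalues is at most `λ_1 = (1 + cos (π / n)) / 2`.
-/

open Real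

/-- Coordinatewise reflection: maps `−1` to `0`, `n` to `n−1`, and fixes everything else. -/
def reflect (n : ℕ) (z : ℤ) : ℤ :=
  if z = -1 then 0 else if z = (n : ℤ) then (n : ℤ) - 1 else z

/-- The weighted Neumann graph Laplacian on `{0,…,n−1}³`:
`(A f)(k) = (1/16) Σ_{ε ∈ {−1,0,1}³, ε ≠ 0} 2^{1−|ε|₁} (f(k) − f(ρ(k+ε)))`. -/
noncomputable def graphLap (n : ℕ) (f : (Fin 3 → ℤ) → ℝ) (k : Fin 3 → ℤ) : ℝ :=
  (1 / 16) * ∑ ε ∈ (Finset.Icc (fun _ => (-1 : ℤ)) (fun _ => (1 : ℤ))).erase 0,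
    (2 : ℝ) ^ ((1 : ℤ) - ∑ i, |ε i|) * (f k - f (fun i => reflect n (k i + ε i)))

open Finset

noncomputable def dctWeight (m : ℕ) : ℝ := if m = 0 then 1 else 2

noncomputable def dctBasis (n m : ℕ) (j : ℤ) : ℝ := cos (π * m * (2 * j + 1) / (2 * n))

theorem sin_half_mul_sum_dctWeight_mul_cos (θ : ℝ) (n : ℕ) :
    sin (θ / 2) * ∑ m ∈ range (n + 1), dctWeight m * cos (m * θ) = sin ((n + 1 / 2) * θ) := by
  induction n with
  | zero => simp [dctWeight]; ring_nf
  | succ n ih =>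
    have h := two_mul_sin_mul_cos (θ / 2) ((n + 1) * θ)
    rw [sum_range_succ, mul_add, ih, dctWeight, if_neg n.succ_ne_zero]
    rw [show θ / 2 - (n + 1) * θ = -((n + 1 / 2) * θ) by ring, sin_neg] at h
    push_cast
    rw [show ((n + 1 : ℝ) + 1 / 2) * θ = θ / 2 + (n + 1) * θ by ring]
    linarith

theorem sum_dctWeight_mul_cos_int_mul {n : ℕ} (hn : 0 < n) {t : ℤ} (ht0 : t ≠ 0)
    (ht : |t| < 2 * n) :
    ∑ m ∈ range n, dctWeight m * cos (m * (π * t / n)) = -cos (π * t) := by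
  set θ := π * t / n
  have hsin : sin (θ / 2) ≠ 0 := by
    have hθ : θ / 2 = π * (t / (2 * n)) := by simp only [θ]; ring
    have ht' : |(t : ℝ) / (2 * n)| < 1 := by
      rw [abs_div, abs_of_pos (by positivity : (0 : ℝ) < 2 * n), div_lt_one (by positivity)]
      exact_mod_cast ht
    have hlt : |θ / 2| < π := by
      rw [hθ, abs_mul, abs_of_pos pi_pos]
      exact mul_lt_of_lt_one_right pi_pos ht'
    rw [Ne, sin_eq_zero_iff_of_lt_of_lt (abs_lt.mp hlt).1 (abs_lt.mp hlt).2, hθ]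
    simp [ht0, pi_ne_zero, hn.ne']
  obtain ⟨n, rfl⟩ := Nat.exists_eq_add_of_lt hn
  apply mul_left_cancel₀ hsin
  rw [zero_add, sin_half_mul_sum_dctWeight_mul_cos,
    show ((n : ℝ) + 1 / 2) * θ = t * π - θ / 2 by simp only [θ]; push_cast; field_simp; ring,
    sin_sub, sin_int_mul_pi, mul_comm π]
  ring

theorem sum_dctWeight_mul_dctBasis_mul_dctBasis {n : ℕ} (hn : 0 < n) {j j' : ℤ}
    (hj : j ∈ Icc 0 ((n : ℤ) - 1)) (hj' : j' ∈ Icc 0 ((n : ℤ) - 1)) :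
    ∑ m ∈ range n, dctWeight m * (dctBasis n m j * dctBasis n m j') =
      if j = j' then (n : ℝ) else 0 := by
  rw [mem_Icc] at hj hj'
  have hprod : ∀ m : ℕ, dctBasis n m j * dctBasis n m j' =
      (cos (m * (π * (j - j' : ℤ) / n)) + cos (m * (π * (j + j' + 1 : ℤ) / n))) / 2 := by
    intro m
    rw [dctBasis, dctBasis, ← mul_div_cancel_left₀ (cos _ * cos _) (two_ne_zero' ℝ),
      ← mul_assoc, two_mul_cos_mul_cos]
    congr 3 <;> push_cast <;> field_simp <;> ring
  have hsplit : ∑ m ∈ range n, dctWeight m * (dctBasis n m j * dctBasis n m j') =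
      (∑ m ∈ range n, dctWeight m * cos (m * (π * (j - j' : ℤ) / n)) +
        ∑ m ∈ range n, dctWeight m * cos (m * (π * (j + j' + 1 : ℤ) / n))) / 2 := by
    rw [← sum_add_distrib, sum_div]
    exact sum_congr rfl fun m _ => by rw [hprod]; ring
  rw [hsplit, sum_dctWeight_mul_cos_int_mul hn (t := j + j' + 1) (by omega)
    (by rw [abs_of_pos (by omega)]; omega)]
  split_ifs with hjj
  · subst hjj
    obtain ⟨n, rfl⟩ := Nat.exists_eq_add_of_lt hn
    rw [show π * ((j + j + 1 : ℤ) : ℝ) = π + j * (2 * π) by push_cast; ring,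
      cos_add_int_mul_two_pi, cos_pi, sum_range_succ']
    simp [dctWeight]
    ring
  · rw [sum_dctWeight_mul_cos_int_mul hn (sub_ne_zero.mpr hjj) (by rw [abs_lt]; omega),
      show π * ((j + j' + 1 : ℤ) : ℝ) = π * ((j - j' : ℤ) : ℝ) + π + j' * (2 * π) by push_cast; ring,
      cos_add_int_mul_two_pi, cos_add_pi]
    ring

theorem dctBasis_reflect (n m : ℕ) (z : ℤ) : dctBasis n m (reflect n z) = dctBasis n m z := by
  rcases eq_or_ne n 0 with rfl | hn
  · simp [dctBasis]
  unfold reflect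
  split_ifs with h₁ h₂
  · subst h₁
    rw [dctBasis, dctBasis, ← cos_neg]
    congr 1
    push_cast
    ring
  · subst h₂
    rw [dctBasis, dctBasis]
    push_cast
    rw [show π * m * (2 * (n - 1) + 1) / (2 * n) = m * π - π * m / (2 * n) by field_simp; ring,
      show π * m * (2 * n + 1) / (2 * n) = m * π + π * m / (2 * n) by field_simp,
      cos_sub, cos_add, sin_nat_mul_pi]
    ring
  · rfl

theorem dctBasis_sub_one_add_dctBasis_add_one (n m : ℕ) (j : ℤ) :
    dctBasis n m (j - 1) + dctBasis n m (j + 1) = 2 * cos (π * m / n) * dctBasis n m j := by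
  rw [dctBasis, dctBasis, dctBasis, mul_assoc 2, mul_comm (cos (π * m / n)), ← mul_assoc,
    two_mul_cos_mul_cos]
  congr 2 <;> push_cast <;> ring

noncomputable def lazyWalkWeight (z : ℤ) : ℝ := 2 ^ (-|z|) / 2

theorem sum_lazyWalkWeight : ∑ z ∈ Icc (-1 : ℤ) 1, lazyWalkWeight z = 1 := by
  rw [show Icc (-1 : ℤ) 1 = {-1, 0, 1} by rfl, sum_insert (by decide), sum_pair (by decide)]
  norm_num [lazyWalkWeight]

noncomputable def dctEigenvalue (n m : ℕ) : ℝ := (1 + cos (π * m / n)) / 2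

theorem sum_lazyWalkWeight_mul_dctBasis (n m : ℕ) (j : ℤ) :
    ∑ z ∈ Icc (-1 : ℤ) 1, lazyWalkWeight z * dctBasis n m (j + z) =
      dctEigenvalue n m * dctBasis n m j := by
  have h := dctBasis_sub_one_add_dctBasis_add_one n m j
  rw [show Icc (-1 : ℤ) 1 = {-1, 0, 1} by rfl, sum_insert (by decide), sum_pair (by decide),
    dctEigenvalue]
  simp only [lazyWalkWeight, ← sub_eq_add_neg, add_zero]
  norm_num
  linarith

theorem dctEigenvalue_nonneg (n m : ℕ) : 0 ≤ dctEigenvalue n m := by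
  rw [dctEigenvalue]
  linarith [neg_one_le_cos (π * m / n)]

theorem dctEigenvalue_le_one (n m : ℕ) : dctEigenvalue n m ≤ 1 := by
  rw [dctEigenvalue]
  linarith [cos_le_one (π * m / n)]

theorem dctEigenvalue_le_dctEigenvalue_one {n m : ℕ} (hm : m ≠ 0) (hmn : m ≤ n) :
    dctEigenvalue n m ≤ dctEigenvalue n 1 := by
  have hn : (0 : ℝ) < n := by exact_mod_cast (Nat.pos_of_ne_zero hm).trans_le hmn
  have hm' : (1 : ℝ) ≤ m := by exact_mod_cast Nat.one_le_iff_ne_zero.mpr hm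
  have hmn' : (m : ℝ) ≤ n := by exact_mod_cast hmn
  rw [dctEigenvalue, dctEigenvalue, Nat.cast_one, mul_one]
  gcongr
  apply cos_le_cos_of_nonneg_of_le_pi (by positivity)
  · rw [div_le_iff₀ hn]
    nlinarith [pi_pos]
  · gcongr
    exact le_mul_of_one_le_right pi_pos.le hm'

section Tensor

variable {ι : Type*} [Fintype ι]

noncomputable def dctBasisPi (n : ℕ) (μ : ι → ℕ) (k : ι → ℤ) : ℝ := ∏ i, dctBasis n (μ i) (k i)

noncomputable def dctWeightPi (n : ℕ) (μ : ι → ℕ) : ℝ := ∏ i, dctWeight (μ i) / n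

theorem dctBasisPi_zero (n : ℕ) (k : ι → ℤ) : dctBasisPi n 0 k = 1 := by
  simp [dctBasisPi, dctBasis]

theorem dctWeightPi_nonneg (n : ℕ) (μ : ι → ℕ) : 0 ≤ dctWeightPi n μ :=
  prod_nonneg fun i _ => div_nonneg (by unfold dctWeight; split_ifs <;> norm_num) n.cast_nonneg

variable [DecidableEq ι]

theorem prod_dctEigenvalue_le {n : ℕ} {μ : ι → ℕ} (hμ : μ ∈ Fintype.piFinset fun _ => range n)
    (hμ0 : μ ≠ 0) : ∏ i, dctEigenvalue n (μ i) ≤ dctEigenvalue n 1 := by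
  obtain ⟨i, hi⟩ := Function.ne_iff.mp hμ0
  calc ∏ i, dctEigenvalue n (μ i) ≤ ∏ j ∈ {i}, dctEigenvalue n (μ j) :=
        prod_le_prod_of_subset_of_le_one (subset_univ _) (fun j _ => dctEigenvalue_nonneg _ _)
          fun j _ _ => dctEigenvalue_le_one _ _
    _ ≤ dctEigenvalue n 1 := by
      rw [prod_singleton]
      exact dctEigenvalue_le_dctEigenvalue_one hi
        (mem_range.mp (Fintype.mem_piFinset.mp hμ i)).le

noncomputable def dctCoeff (n : ℕ) (f : (ι → ℤ) → ℝ) (μ : ι → ℕ) : ℝ :=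
  ∑ k ∈ Icc (0 : ι → ℤ) (fun _ => (n : ℤ) - 1), f k * dctBasisPi n μ k

theorem sum_dctWeightPi_mul_dctBasisPi_mul_dctBasisPi {n : ℕ} (hn : 0 < n) {k k' : ι → ℤ}
    (hk : k ∈ Icc 0 fun _ => (n : ℤ) - 1) (hk' : k' ∈ Icc 0 fun _ => (n : ℤ) - 1) :
    ∑ μ ∈ Fintype.piFinset (fun _ => range n),
      dctWeightPi n μ * (dctBasisPi n μ k * dctBasisPi n μ k') = if k = k' then 1 else 0 := by
  rw [Pi.Icc_eq, Fintype.mem_piFinset] at hk hk'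
  have hcoord : ∀ i, ∑ m ∈ range n, dctWeight m / n * (dctBasis n m (k i) * dctBasis n m (k' i)) =
      if k i = k' i then 1 else 0 := by
    intro i
    simp_rw [div_mul_eq_mul_div, ← sum_div,
      sum_dctWeight_mul_dctBasis_mul_dctBasis hn (hk i) (hk' i)]
    split_ifs <;> simp [hn.ne']
  simp_rw [dctWeightPi, dctBasisPi, ← prod_mul_distrib]
  rw [← prod_univ_sum (fun _ => range n)
    (fun i m => dctWeight m / n * (dctBasis n m (k i) * dctBasis n m (k' i)))]
  simp_rw [hcoord]
  rw [Fintype.prod_boole]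
  simp [funext_iff]

theorem sum_dctWeightPi_mul_dctCoeff_mul_dctBasisPi {n : ℕ} (hn : 0 < n) (f : (ι → ℤ) → ℝ)
    {k : ι → ℤ} (hk : k ∈ Icc 0 fun _ => (n : ℤ) - 1) :
    ∑ μ ∈ Fintype.piFinset (fun _ => range n),
      dctWeightPi n μ * dctCoeff n f μ * dctBasisPi n μ k = f k := by
  simp_rw [dctCoeff, mul_sum, sum_mul]
  rw [sum_comm]
  calc _ = ∑ k' ∈ Icc 0 (fun _ => (n : ℤ) - 1), f k' * ∑ μ ∈ Fintype.piFinset (fun _ => range n),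
          dctWeightPi n μ * (dctBasisPi n μ k' * dctBasisPi n μ k) :=
        sum_congr rfl fun k' _ => by rw [mul_sum]; exact sum_congr rfl fun μ _ => by ring
    _ = ∑ k' ∈ Icc 0 (fun _ => (n : ℤ) - 1), f k' * if k' = k then 1 else 0 :=
        sum_congr rfl fun k' hk' => by
          rw [sum_dctWeightPi_mul_dctBasisPi_mul_dctBasisPi hn hk' hk]
    _ = f k := by simp [hk]

theorem sum_mul_sum_mul_dctBasisPi (n : ℕ) (f : (ι → ℤ) → ℝ) (s : Finset (ι → ℕ))
    (c : (ι → ℕ) → ℝ) :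
    ∑ k ∈ Icc 0 (fun _ => (n : ℤ) - 1), f k * ∑ μ ∈ s, c μ * dctBasisPi n μ k =
      ∑ μ ∈ s, c μ * dctCoeff n f μ := by
  simp_rw [dctCoeff, mul_sum]
  rw [sum_comm]
  exact sum_congr rfl fun _ _ => sum_congr rfl fun _ _ => by ring

theorem sum_sq_eq_sum_dctWeightPi_mul_dctCoeff_sq {n : ℕ} (hn : 0 < n) (f : (ι → ℤ) → ℝ) :
    ∑ k ∈ Icc 0 (fun _ => (n : ℤ) - 1), f k ^ 2 =
      ∑ μ ∈ Fintype.piFinset (fun _ => range n), dctWeightPi n μ * dctCoeff n f μ ^ 2 := by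
  calc ∑ k ∈ Icc 0 (fun _ => (n : ℤ) - 1), f k ^ 2
      = ∑ k ∈ Icc 0 (fun _ => (n : ℤ) - 1), f k * ∑ μ ∈ Fintype.piFinset (fun _ => range n),
          dctWeightPi n μ * dctCoeff n f μ * dctBasisPi n μ k :=
        sum_congr rfl fun k hk => by
          rw [sq, sum_dctWeightPi_mul_dctCoeff_mul_dctBasisPi hn f hk]
    _ = _ := by
      rw [sum_mul_sum_mul_dctBasisPi]
      exact sum_congr rfl fun _ _ => by ring

end Tensor

theorem reflect_mem_Icc {n : ℕ} (hn : 0 < n) {z : ℤ} (hz : z ∈ Icc (-1) (n : ℤ)) :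
    reflect n z ∈ Icc 0 ((n : ℤ) - 1) := by
  rw [mem_Icc] at hz ⊢
  unfold reflect
  split_ifs <;> omega

theorem graphLap_eq_sum_lazyWalkWeight (n : ℕ) (f : (Fin 3 → ℤ) → ℝ) (k : Fin 3 → ℤ) :
    graphLap n f k = ∑ ε ∈ (Icc (fun _ => (-1 : ℤ)) (fun _ => (1 : ℤ))).erase 0,
      (∏ i, lazyWalkWeight (ε i)) * (f k - f (fun i => reflect n (k i + ε i))) := by
  rw [graphLap, mul_sum]
  refine sum_congr rfl fun ε _ => ?_
  rw [← mul_assoc]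
  congr 1
  simp only [lazyWalkWeight, Fin.prod_univ_three, Fin.sum_univ_three]
  rw [zpow_sub₀ two_ne_zero, zpow_add₀ two_ne_zero, zpow_add₀ two_ne_zero, zpow_neg, zpow_neg,
    zpow_neg]
  field_simp
  ring

theorem graphLap_sum_mul (n : ℕ) {α : Type*} (s : Finset α) (c : α → ℝ)
    (g : α → (Fin 3 → ℤ) → ℝ) (k : Fin 3 → ℤ) :
    graphLap n (fun x => ∑ a ∈ s, c a * g a x) k = ∑ a ∈ s, c a * graphLap n (g a) k := by
  simp_rw [graphLap, ← sum_sub_distrib, mul_sum]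
  rw [sum_comm]
  exact sum_congr rfl fun _ _ => sum_congr rfl fun _ _ => by ring

theorem graphLap_congr {n : ℕ} {f g : (Fin 3 → ℤ) → ℝ} {k : Fin 3 → ℤ}
    (hk : k ∈ Icc 0 fun _ => (n : ℤ) - 1) (hfg : ∀ x ∈ Icc 0 (fun _ => (n : ℤ) - 1), f x = g x) :
    graphLap n f k = graphLap n g k := by
  have hk' : ∀ i, 0 ≤ k i ∧ k i ≤ n - 1 := fun i => ⟨(mem_Icc.mp hk).1 i, (mem_Icc.mp hk).2 i⟩
  have hn : 0 < n := by have := hk' 0; omega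
  unfold graphLap
  congr 1
  refine sum_congr rfl fun ε hε => ?_
  have hε' : ∀ i, -1 ≤ ε i ∧ ε i ≤ 1 := fun i =>
    ⟨(mem_Icc.mp (mem_of_mem_erase hε)).1 i, (mem_Icc.mp (mem_of_mem_erase hε)).2 i⟩
  have hreflect : ∀ i, reflect n (k i + ε i) ∈ Icc 0 ((n : ℤ) - 1) := fun i =>
    reflect_mem_Icc hn (mem_Icc.mpr ⟨by grind, by grind⟩)
  rw [hfg k hk, hfg _ (mem_Icc.mpr ⟨fun i => (mem_Icc.mp (hreflect i)).1,
    fun i => (mem_Icc.mp (hreflect i)).2⟩)]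

theorem graphLap_dctBasisPi (n : ℕ) (μ : Fin 3 → ℕ) (k : Fin 3 → ℤ) :
    graphLap n (dctBasisPi n μ) k = (1 - ∏ i, dctEigenvalue n (μ i)) * dctBasisPi n μ k := by
  have hreflect : ∀ ε : Fin 3 → ℤ, dctBasisPi n μ (fun i => reflect n (k i + ε i)) =
      ∏ i, dctBasis n (μ i) (k i + ε i) := fun ε => by simp only [dctBasisPi, dctBasis_reflect]
  rw [graphLap_eq_sum_lazyWalkWeight]
  simp_rw [hreflect]
  rw [sum_erase _ (by simp [dctBasisPi])]
  simp_rw [mul_sub, sum_sub_distrib, ← sum_mul, ← prod_mul_distrib, Pi.Icc_eq]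
  rw [← prod_univ_sum (fun _ => Icc (-1 : ℤ) 1) (fun _ z => lazyWalkWeight z),
    ← prod_univ_sum (fun _ => Icc (-1 : ℤ) 1)
      (fun i z => lazyWalkWeight z * dctBasis n (μ i) (k i + z))]
  simp_rw [sum_lazyWalkWeight, sum_lazyWalkWeight_mul_dctBasis, prod_mul_distrib, dctBasisPi]
  ring

theorem sum_mul_graphLap_eq {n : ℕ} (hn : 0 < n) (f : (Fin 3 → ℤ) → ℝ) :
    ∑ k ∈ Icc 0 (fun _ => (n : ℤ) - 1), f k * graphLap n f k =
      ∑ μ ∈ Fintype.piFinset (fun _ => range n),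
        (1 - ∏ i, dctEigenvalue n (μ i)) * (dctWeightPi n μ * dctCoeff n f μ ^ 2) := by
  have hexpand : ∀ k ∈ Icc 0 (fun _ => (n : ℤ) - 1), graphLap n f k =
      ∑ μ ∈ Fintype.piFinset (fun _ => range n),
        (1 - ∏ i, dctEigenvalue n (μ i)) * dctWeightPi n μ * dctCoeff n f μ * dctBasisPi n μ k := by
    intro k hk
    rw [graphLap_congr hk fun x hx => (sum_dctWeightPi_mul_dctCoeff_mul_dctBasisPi hn f hx).symm,
      graphLap_sum_mul n _ (fun μ => dctWeightPi n μ * dctCoeff n f μ) (dctBasisPi n)]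
    exact sum_congr rfl fun μ _ => by rw [graphLap_dctBasisPi]; ring
  rw [sum_congr rfl fun k hk => by rw [hexpand k hk], sum_mul_sum_mul_dctBasisPi]
  exact sum_congr rfl fun _ _ => by ring

/-- Spectral gap of the weighted Neumann graph Laplacian above the constants: if
`Σ_k f(k) = 0` then `⟨f, A f⟩ ≥ ((1 − cos(π/n))/2) ‖f‖²`. -/
theorem graphLap_gap (n : ℕ) (hn : 2 ≤ n) (f : (Fin 3 → ℤ) → ℝ)
    (hf : (∑ k ∈ Finset.Icc (0 : Fin 3 → ℤ) (fun _ => (n : ℤ) - 1), f k) = 0) :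
    (∑ k ∈ Finset.Icc (0 : Fin 3 → ℤ) (fun _ => (n : ℤ) - 1), f k * graphLap n f k)
      ≥ (1 - Real.cos (π / n)) / 2 *
        ∑ k ∈ Finset.Icc (0 : Fin 3 → ℤ) (fun _ => (n : ℤ) - 1), (f k) ^ 2 := by
  have hn0 : 0 < n := by omega
  rw [ge_iff_le, sum_sq_eq_sum_dctWeightPi_mul_dctCoeff_sq hn0, sum_mul_graphLap_eq hn0, mul_sum]
  refine sum_le_sum fun μ hμ => ?_
  rcases eq_or_ne μ 0 with rfl | hμ0
  · rw [show dctCoeff n f 0 = 0 by simpa [dctCoeff, dctBasisPi_zero] using hf]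
    simp
  · refine mul_le_mul_of_nonneg_right ?_ (mul_nonneg (dctWeightPi_nonneg n μ) (sq_nonneg _))
    have hgap := prod_dctEigenvalue_le hμ hμ0
    rw [dctEigenvalue, Nat.cast_one, mul_one] at hgap
    linarith
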